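/- arXiv:2604.01809 — 4 statements merged into one kernel-verified Lean document; each statement's English description precedes it below -/
import Mathlib

section
/- Let a : (0,1] → ℝ be C¹ with a(x) > 0 on (0,1] and satisfy x·|a'(x)| ≤ α·a(x) for some α ∈ [0,1). Then for every τ ∈ [0,1), the improper integral ∫_τ^1 1/a(x) dx is finite and satisfies ∫_τ^1 1/a(x) dx ≤ (1 − τ^(1−α)) / (a(1)·(1−α)). -/
open Real Set MeasureTheory

/-- Under (H2), for every `τ ∈ [0,1)` the integral `∫_τ^1 1/a` is finite and bounded
by `(1 − τ^(1−α)) / (a(1)·(1−α))`. -/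
theorem stmt2 (a a' : ℝ → ℝ) (α : ℝ)
    (hα0 : 0 ≤ α) (hα1 : α < 1)
    (hpos : ∀ x ∈ Ioc (0:ℝ) 1, 0 < a x)
    (hderiv : ∀ x ∈ Ioc (0:ℝ) 1, HasDerivAt a (a' x) x)
    (hcont : ContinuousOn a' (Ioc (0:ℝ) 1))
    (hbound : ∀ x ∈ Ioc (0:ℝ) 1, x * |a' x| ≤ α * a x) :
    ∀ τ ∈ Ico (0:ℝ) 1,
      IntegrableOn (fun x => 1 / a x) (Ioc τ 1) ∧
      ∫ x in Ioc τ 1, 1 / a x ≤ (1 - τ ^ (1 - α)) / (a 1 * (1 - α)) := by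
  have h1pos : 0 < a 1 := hpos 1 ⟨one_pos, le_refl 1⟩
  have hcontA : ContinuousOn a (Ioc (0:ℝ) 1) := fun x hx =>
    ((hderiv x hx).continuousAt).continuousWithinAt
  -- key pointwise bound: a 1 * x^α ≤ a x on (0,1]
  have hkey : ∀ x ∈ Ioc (0:ℝ) 1, a 1 * x ^ α ≤ a x := by
    set h : ℝ → ℝ := fun x => a x * x ^ (-α) with hh
    have hanti : AntitoneOn h (Ioc (0:ℝ) 1) := by
      apply antitoneOn_of_deriv_nonpos (convex_Ioc 0 1)
      · exact hcontA.mul (ContinuousOn.rpow_const continuousOn_id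
          (fun x hx => Or.inl (ne_of_gt hx.1)))
      · intro x hx
        rw [interior_Ioc] at hx
        exact ((hderiv x (Ioo_subset_Ioc_self hx)).mul
          (Real.hasDerivAt_rpow_const (Or.inl (ne_of_gt hx.1)))).differentiableAt.differentiableWithinAt
      · intro x hx
        rw [interior_Ioc] at hx
        have hx' : x ∈ Ioc (0:ℝ) 1 := Ioo_subset_Ioc_self hx
        have hd : HasDerivAt h (a' x * x ^ (-α) + a x * ((-α) * x ^ (-α - 1))) x :=
          (hderiv x hx').mul (Real.hasDerivAt_rpow_const (Or.inl (ne_of_gt hx.1)))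
        rw [hd.deriv]
        have hxpow : x ^ (-α) = x ^ (-α - 1) * x := by
          rw [← Real.rpow_add_one (ne_of_gt hx.1) (-α - 1)]
          norm_num
        have heq : a' x * x ^ (-α) + a x * ((-α) * x ^ (-α - 1))
            = x ^ (-α - 1) * (x * a' x - α * a x) := by
          rw [hxpow]; ring
        rw [heq]
        apply mul_nonpos_of_nonneg_of_nonpos (Real.rpow_nonneg hx.1.le _)
        have hb := hbound x hx'
        have h1 : x * a' x ≤ x * |a' x| :=
          mul_le_mul_of_nonneg_left (le_abs_self _) hx.1.le
        linarith
    intro x hx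
    have h2 : a 1 ≤ a x * x ^ (-α) := by
      have := hanti hx ⟨one_pos, le_refl 1⟩ hx.2
      simpa [hh, Real.one_rpow] using this
    have hxa : (0:ℝ) < x ^ α := Real.rpow_pos_of_pos hx.1 α
    calc a 1 * x ^ α ≤ a x * x ^ (-α) * x ^ α :=
          mul_le_mul_of_nonneg_right h2 hxa.le
      _ = a x := by
          rw [mul_assoc, ← Real.rpow_add hx.1]; simp
  intro τ hτ
  obtain ⟨hτ0, hτ1⟩ := hτ
  have hsub : Ioc τ 1 ⊆ Ioc (0:ℝ) 1 := Ioc_subset_Ioc_left hτ0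
  -- integrability of the comparison function
  have hgint : IntegrableOn (fun x => (a 1)⁻¹ * x ^ (-α)) (Ioc τ 1) := by
    apply Integrable.const_mul
    have hii : IntervalIntegrable (fun x : ℝ => x ^ (-α)) volume τ 1 :=
      intervalIntegral.intervalIntegrable_rpow' (by linarith)
    rwa [intervalIntegrable_iff_integrableOn_Ioc_of_le hτ1.le] at hii
  -- pointwise bound
  have hptw : ∀ x ∈ Ioc τ 1, 1 / a x ≤ (a 1)⁻¹ * x ^ (-α) := by
    intro x hx
    have hx' : x ∈ Ioc (0:ℝ) 1 := hsub hx
    have hax := hpos x hx'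
    have hk := hkey x hx'
    have hxa : (0:ℝ) < x ^ α := Real.rpow_pos_of_pos hx'.1 α
    have h1 : 1 / a x ≤ 1 / (a 1 * x ^ α) :=
      one_div_le_one_div_of_le (by positivity) hk
    calc 1 / a x ≤ 1 / (a 1 * x ^ α) := h1
      _ = (a 1)⁻¹ * x ^ (-α) := by
          rw [Real.rpow_neg hx'.1.le, one_div, mul_inv]
  have hmeas : AEStronglyMeasurable (fun x => 1 / a x) (volume.restrict (Ioc τ 1)) :=
    (ContinuousOn.div continuousOn_const (hcontA.mono hsub)
      (fun x hx => ne_of_gt (hpos x (hsub hx)))).aestronglyMeasurable measurableSet_Ioc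
  have hint : IntegrableOn (fun x => 1 / a x) (Ioc τ 1) := by
    apply Integrable.mono' hgint hmeas
    filter_upwards [ae_restrict_mem measurableSet_Ioc] with x hx
    rw [Real.norm_eq_abs, abs_of_pos (one_div_pos.mpr (hpos x (hsub hx)))]
    exact hptw x hx
  refine ⟨hint, ?_⟩
  have hle : ∫ x in Ioc τ 1, 1 / a x ≤ ∫ x in Ioc τ 1, (a 1)⁻¹ * x ^ (-α) :=
    setIntegral_mono_on hint hgint measurableSet_Ioc hptw
  have hcomp : ∫ x in Ioc τ 1, (a 1)⁻¹ * x ^ (-α)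
      = (1 - τ ^ (1 - α)) / (a 1 * (1 - α)) := by
    rw [MeasureTheory.integral_const_mul]
    rw [← intervalIntegral.integral_of_le hτ1.le]
    rw [integral_rpow (Or.inl (by linarith))]
    rw [Real.one_rpow]
    have he : -α + 1 = 1 - α := by ring
    rw [he]
    have hne : a 1 ≠ 0 := ne_of_gt h1pos
    have hne2 : (1 : ℝ) - α ≠ 0 := by linarith
    field_simp
  linarith [hle, hcomp.le, hcomp.ge]
end

section
/- Let a : (0,1] → ℝ be C¹ with a(x) > 0 on (0,1] and satisfy x·|a'(x)| ≤ α·a(x) for some α ∈ [0,1). Then ∫_0^1 τ/a(τ) dτ ≤ 1 / (a(1)·(2−α)). -/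
open Real Set MeasureTheory

/-!
The bound `x |a'(x)| ≤ α a(x)` says exactly that `x ↦ a(x) x^(-α)` is nonincreasing, since its
derivative is `(x a'(x) - α a(x)) x^(-α-1)`. Comparing with `x = 1` gives `a(x) ≥ a(1) x^α`, so the
integrand is dominated by `τ^(1-α) / a(1)`, which is integrable on `(0,1]` with integral
`1 / (a(1) (2-α))` because `1 - α > -1`.
-/

lemma hasDerivAt_mul_rpow_neg {a : ℝ → ℝ} {a' t : ℝ} (α : ℝ) (ht : 0 < t)
    (h : HasDerivAt a a' t) :
    HasDerivAt (fun s => a s * s ^ (-α)) ((t * a' - α * a t) * t ^ (-α - 1)) t := by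
  have hpow : t ^ (-α) = t ^ (-α - 1) * t := by
    rw [← rpow_add_one ht.ne']
    ring_nf
  refine (h.mul (hasDerivAt_rpow_const (p := -α) (Or.inl ht.ne'))).congr_deriv ?_
  rw [hpow]
  ring

lemma antitoneOn_mul_rpow_neg {a a' : ℝ → ℝ} {α : ℝ} {s : Set ℝ} (hs : Convex ℝ s)
    (hs_pos : s ⊆ Ioi 0) (hderiv : ∀ t ∈ s, HasDerivAt a (a' t) t)
    (hbound : ∀ t ∈ s, t * a' t ≤ α * a t) :
    AntitoneOn (fun t => a t * t ^ (-α)) s := by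
  have hderiv' : ∀ t ∈ s, HasDerivAt (fun t => a t * t ^ (-α))
      ((t * a' t - α * a t) * t ^ (-α - 1)) t := fun t ht =>
    hasDerivAt_mul_rpow_neg α (hs_pos ht) (hderiv t ht)
  refine antitoneOn_of_hasDerivWithinAt_nonpos hs
    (fun t ht => (hderiv' t ht).continuousAt.continuousWithinAt)
    (fun t ht => (hderiv' t (interior_subset ht)).hasDerivWithinAt) fun t ht => ?_
  have ht := interior_subset ht
  exact mul_nonpos_of_nonpos_of_nonneg (sub_nonpos.2 (hbound t ht))
    (rpow_nonneg (hs_pos ht).le _)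

lemma mul_rpow_le_of_mul_deriv_le {a a' : ℝ → ℝ} {α : ℝ}
    (hderiv : ∀ t ∈ Ioc (0 : ℝ) 1, HasDerivAt a (a' t) t)
    (hbound : ∀ t ∈ Ioc (0 : ℝ) 1, t * a' t ≤ α * a t) {x : ℝ} (hx : x ∈ Ioc (0 : ℝ) 1) :
    a 1 * x ^ α ≤ a x := by
  have hmono := antitoneOn_mul_rpow_neg (convex_Ioc 0 1) Ioc_subset_Ioi_self hderiv hbound
    hx ⟨one_pos, le_rfl⟩ hx.2
  have hx_pos : 0 < x ^ α := rpow_pos_of_pos hx.1 α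
  calc a 1 * x ^ α = (a 1 * (1 : ℝ) ^ (-α)) * x ^ α := by rw [one_rpow, mul_one]
    _ ≤ (a x * x ^ (-α)) * x ^ α := mul_le_mul_of_nonneg_right hmono hx_pos.le
    _ = a x := by rw [mul_assoc, ← rpow_add hx.1, neg_add_cancel, rpow_zero, mul_one]

lemma div_le_rpow_sub_div {b c α τ : ℝ} (hτ : 0 < τ) (hc : 0 < c) (h : c * τ ^ α ≤ b) :
    τ / b ≤ τ ^ (1 - α) / c := by
  calc τ / b ≤ τ / (c * τ ^ α) := div_le_div_of_nonneg_left hτ.le (by positivity) h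
    _ = τ ^ (1 - α) / c := by rw [rpow_sub hτ, rpow_one, div_div, mul_comm]

lemma integral_Ioc_zero_one_rpow {r : ℝ} (hr : -1 < r) :
    ∫ τ in Ioc (0 : ℝ) 1, τ ^ r = 1 / (r + 1) := by
  rw [← intervalIntegral.integral_of_le zero_le_one, integral_rpow (Or.inl hr), one_rpow,
    zero_rpow (by linarith), sub_zero]

theorem stmt3_general (a a' : ℝ → ℝ) (α : ℝ)
    (hα1 : α < 1)
    (hpos : ∀ x ∈ Ioc (0:ℝ) 1, 0 < a x)
    (hderiv : ∀ x ∈ Ioc (0:ℝ) 1, HasDerivAt a (a' x) x)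
    (hbound : ∀ x ∈ Ioc (0:ℝ) 1, x * |a' x| ≤ α * a x) :
    IntegrableOn (fun τ => τ / a τ) (Ioc (0:ℝ) 1) ∧
      ∫ τ in Ioc (0:ℝ) 1, τ / a τ ≤ 1 / (a 1 * (2 - α)) := by
  have ha1 : 0 < a 1 := hpos 1 ⟨one_pos, le_rfl⟩
  have hlower : ∀ x ∈ Ioc (0:ℝ) 1, a 1 * x ^ α ≤ a x := fun x hx =>
    mul_rpow_le_of_mul_deriv_le hderiv (fun t ht =>
      (mul_le_mul_of_nonneg_left (le_abs_self _) ht.1.le).trans (hbound t ht)) hx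
  have hdom : ∀ τ ∈ Ioc (0:ℝ) 1, τ / a τ ≤ τ ^ (1 - α) / a 1 := fun τ hτ =>
    div_le_rpow_sub_div hτ.1 ha1 (hlower τ hτ)
  have hg : IntegrableOn (fun τ : ℝ => τ ^ (1 - α) / a 1) (Ioc (0:ℝ) 1) :=
    (intervalIntegral.intervalIntegrable_rpow' (by linarith)).1.div_const _
  have hcont : ContinuousOn (fun τ : ℝ => τ / a τ) (Ioc (0:ℝ) 1) :=
    continuousOn_id.div (fun x hx => (hderiv x hx).continuousAt.continuousWithinAt)
      fun x hx => (hpos x hx).ne'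
  have hf : IntegrableOn (fun τ => τ / a τ) (Ioc (0:ℝ) 1) := by
    refine hg.mono' (hcont.aestronglyMeasurable measurableSet_Ioc) ?_
    filter_upwards [self_mem_ae_restrict measurableSet_Ioc] with τ hτ
    rw [norm_of_nonneg (div_nonneg hτ.1.le (hpos τ hτ).le)]
    exact hdom τ hτ
  refine ⟨hf, ?_⟩
  calc ∫ τ in Ioc (0:ℝ) 1, τ / a τ ≤ ∫ τ in Ioc (0:ℝ) 1, τ ^ (1 - α) / a 1 :=
        setIntegral_mono_on hf hg measurableSet_Ioc hdom
    _ = 1 / (a 1 * (2 - α)) := by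
        rw [integral_div, integral_Ioc_zero_one_rpow (by linarith), div_div]
        ring_nf

/-- Under (H2), `∫_0^1 τ/a(τ) dτ ≤ 1/(a(1)·(2−α))`. -/
theorem stmt3 (a a' : ℝ → ℝ) (α : ℝ)
    (hα0 : 0 ≤ α) (hα1 : α < 1)
    (hpos : ∀ x ∈ Ioc (0:ℝ) 1, 0 < a x)
    (hderiv : ∀ x ∈ Ioc (0:ℝ) 1, HasDerivAt a (a' x) x)
    (hcont : ContinuousOn a' (Ioc (0:ℝ) 1))
    (hbound : ∀ x ∈ Ioc (0:ℝ) 1, x * |a' x| ≤ α * a x) :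
    IntegrableOn (fun τ => τ / a τ) (Ioc (0:ℝ) 1) ∧
      ∫ τ in Ioc (0:ℝ) 1, τ / a τ ≤ 1 / (a 1 * (2 - α)) :=
  stmt3_general a a' α hα1 hpos hderiv hbound
end

section
/- Let a : (0,1] → ℝ be C¹ with a > 0 on (0,1] satisfying x·|a'(x)| ≤ α·a(x) for some α ∈ [0,1), and let ψ ∈ H¹((0,1)) (complex-valued) with ψ(1) = 0 and ∫_0^1 a|ψ'|² dx < ∞. Then the limit ψ(0⁺) exists and satisfies |ψ(0)|² ≤ (1/(a(1)(1−α))) · ∫_0^1 a(x)|ψ'(x)|² dx. -/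
open Real Set MeasureTheory Filter Topology intervalIntegral

/-!
The growth condition `x |a'(x)| ≤ α a(x)` makes `x ↦ a(x) x^(-α)` nonincreasing, so
`a(x) ≥ a(1) x^α` and `∫₀¹ 1/a ≤ 1/(a(1)(1-α))` because `α < 1`. Since `ψ'` is integrable,
`ψ(τ) = -∫_τ^1 ψ'` converges to `L = -∫_0^1 ψ'` as `τ → 0⁺`, and Cauchy–Schwarz with the weight
`a` gives `|L|² ≤ (∫₀¹ |ψ'|)² ≤ (∫₀¹ 1/a)(∫₀¹ a |ψ'|²)`.
-/

theorem sq_integral_norm_le_integral_inv_mul_integral_mul_sq {X E : Type*} [MeasurableSpace X]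
    {μ : Measure X} [NormedAddCommGroup E] {w : X → ℝ} {f : X → E}
    (hw : ∀ᵐ x ∂μ, 0 < w x) (hf : AEStronglyMeasurable f μ)
    (hw_inv : Integrable (fun x => (w x)⁻¹) μ)
    (hwf : Integrable (fun x => w x * ‖f x‖ ^ 2) μ) :
    (∫ x, ‖f x‖ ∂μ) ^ 2 ≤ (∫ x, (w x)⁻¹ ∂μ) * ∫ x, w x * ‖f x‖ ^ 2 ∂μ := by
  set u : X → ℝ := fun x => √(w x)⁻¹
  set v : X → ℝ := fun x => √(w x) * ‖f x‖
  have hu_sq : (fun x => u x ^ 2) =ᵐ[μ] fun x => (w x)⁻¹ := by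
    filter_upwards [hw] with x hx
    exact sq_sqrt (inv_pos.2 hx).le
  have hv_sq : (fun x => v x ^ 2) =ᵐ[μ] fun x => w x * ‖f x‖ ^ 2 := by
    filter_upwards [hw] with x hx
    rw [mul_pow, sq_sqrt hx.le]
  have huv : (fun x => u x * v x) =ᵐ[μ] fun x => ‖f x‖ := by
    filter_upwards [hw] with x hx
    show √(w x)⁻¹ * (√(w x) * ‖f x‖) = ‖f x‖
    rw [← mul_assoc, sqrt_inv, inv_mul_cancel₀ (sqrt_pos.2 hx).ne', one_mul]
  have hw_meas : AEStronglyMeasurable w μ := by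
    simpa only [Pi.inv_def, inv_inv] using hw_inv.aemeasurable.inv.aestronglyMeasurable
  have hu : MemLp u (ENNReal.ofReal 2) μ := by
    rw [ENNReal.ofReal_ofNat, memLp_two_iff_integrable_sq
      (continuous_sqrt.comp_aestronglyMeasurable hw_inv.aestronglyMeasurable)]
    exact hw_inv.congr hu_sq.symm
  have hv : MemLp v (ENNReal.ofReal 2) μ := by
    have hv_meas : AEStronglyMeasurable v μ :=
      (continuous_sqrt.comp_aestronglyMeasurable hw_meas).mul hf.norm
    rw [ENNReal.ofReal_ofNat, memLp_two_iff_integrable_sq hv_meas]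
    exact hwf.congr hv_sq.symm
  have holder := integral_mul_le_Lp_mul_Lq_of_nonneg Real.HolderConjugate.two_two
    (Eventually.of_forall fun x => sqrt_nonneg _)
    (Eventually.of_forall fun x => mul_nonneg (sqrt_nonneg _) (norm_nonneg _)) hu hv
  simp only [rpow_two, ← sqrt_eq_rpow] at holder
  rw [integral_congr_ae huv, integral_congr_ae hu_sq, integral_congr_ae hv_sq] at holder
  have hA : 0 ≤ ∫ x, (w x)⁻¹ ∂μ :=
    integral_nonneg_of_ae (hw.mono fun x hx => (inv_pos.2 hx).le)
  have hB : 0 ≤ ∫ x, w x * ‖f x‖ ^ 2 ∂μ :=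
    integral_nonneg_of_ae (hw.mono fun x hx => by positivity)
  calc (∫ x, ‖f x‖ ∂μ) ^ 2
      ≤ (√(∫ x, (w x)⁻¹ ∂μ) * √(∫ x, w x * ‖f x‖ ^ 2 ∂μ)) ^ 2 :=
        pow_le_pow_left₀ (integral_nonneg fun x => norm_nonneg _) holder 2
    _ = (∫ x, (w x)⁻¹ ∂μ) * ∫ x, w x * ‖f x‖ ^ 2 ∂μ := by
        rw [mul_pow, sq_sqrt hA, sq_sqrt hB]

section WeightBounds

variable {a a' : ℝ → ℝ} {α : ℝ}

theorem antitoneOn_mul_rpow_neg_of_mul_abs_deriv_le {b : ℝ}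
    (ha : ∀ x ∈ Ioc 0 b, HasDerivAt a (a' x) x)
    (hbound : ∀ x ∈ Ioc 0 b, x * |a' x| ≤ α * a x) :
    AntitoneOn (fun x => a x * x ^ (-α)) (Ioc 0 b) := by
  have hderiv : ∀ x ∈ Ioc 0 b, HasDerivAt (fun x => a x * x ^ (-α))
      (x ^ (-α - 1) * (x * a' x - α * a x)) x := by
    intro x hx
    refine ((ha x hx).mul (hasDerivAt_rpow_const (p := -α) (Or.inl hx.1.ne'))).congr_deriv ?_
    rw [sub_eq_add_neg (-α), rpow_add hx.1, rpow_neg_one]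
    field_simp [hx.1.ne']
    ring
  refine antitoneOn_of_hasDerivWithinAt_nonpos (convex_Ioc 0 b)
    (fun x hx => (hderiv x hx).continuousAt.continuousWithinAt)
    (fun x hx => (hderiv x (interior_subset hx)).hasDerivWithinAt) fun x hx => ?_
  have hx := interior_subset hx
  exact mul_nonpos_of_nonneg_of_nonpos (rpow_nonneg hx.1.le _)
    (sub_nonpos.2 ((mul_le_mul_of_nonneg_left (le_abs_self _) hx.1.le).trans (hbound x hx)))

theorem mul_rpow_le_of_mul_abs_deriv_le (ha : ∀ x ∈ Ioc 0 1, HasDerivAt a (a' x) x)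
    (hbound : ∀ x ∈ Ioc 0 1, x * |a' x| ≤ α * a x) {x : ℝ} (hx : x ∈ Ioc 0 1) :
    a 1 * x ^ α ≤ a x := by
  have h := antitoneOn_mul_rpow_neg_of_mul_abs_deriv_le ha hbound hx
    (right_mem_Ioc.2 zero_lt_one) hx.2
  dsimp only at h
  rw [one_rpow, mul_one] at h
  calc a 1 * x ^ α ≤ a x * x ^ (-α) * x ^ α :=
        mul_le_mul_of_nonneg_right h (rpow_nonneg hx.1.le α)
    _ = a x := by rw [mul_assoc, ← rpow_add hx.1, neg_add_cancel, rpow_zero, mul_one]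

theorem pos_of_mul_abs_deriv_le (h1 : 0 < a 1) (ha : ∀ x ∈ Ioc 0 1, HasDerivAt a (a' x) x)
    (hbound : ∀ x ∈ Ioc 0 1, x * |a' x| ≤ α * a x) {x : ℝ} (hx : x ∈ Ioc 0 1) : 0 < a x :=
  (mul_pos h1 (rpow_pos_of_pos hx.1 α)).trans_le (mul_rpow_le_of_mul_abs_deriv_le ha hbound hx)

theorem inv_le_inv_mul_rpow_neg_of_mul_abs_deriv_le (h1 : 0 < a 1)
    (ha : ∀ x ∈ Ioc 0 1, HasDerivAt a (a' x) x)
    (hbound : ∀ x ∈ Ioc 0 1, x * |a' x| ≤ α * a x) {x : ℝ} (hx : x ∈ Ioc 0 1) :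
    (a x)⁻¹ ≤ (a 1)⁻¹ * x ^ (-α) := by
  rw [rpow_neg hx.1.le, ← mul_inv]
  exact inv_anti₀ (mul_pos h1 (rpow_pos_of_pos hx.1 α))
    (mul_rpow_le_of_mul_abs_deriv_le ha hbound hx)

theorem integrableOn_Ioc_zero_one_rpow_neg (hα : α < 1) :
    IntegrableOn (fun x : ℝ => x ^ (-α)) (Ioc 0 1) :=
  (intervalIntegrable_rpow' (by linarith)).1

theorem setIntegral_Ioc_zero_one_rpow_neg (hα : α < 1) :
    ∫ x in Ioc (0 : ℝ) 1, x ^ (-α) = 1 / (1 - α) := by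
  rw [← integral_of_le zero_le_one, integral_rpow (Or.inl (by linarith)), one_rpow,
    zero_rpow (by linarith), neg_add_eq_sub]
  ring

theorem integrableOn_inv_of_mul_abs_deriv_le (hα : α < 1) (h1 : 0 < a 1)
    (ha : ∀ x ∈ Ioc 0 1, HasDerivAt a (a' x) x)
    (hbound : ∀ x ∈ Ioc 0 1, x * |a' x| ≤ α * a x) :
    IntegrableOn (fun x => (a x)⁻¹) (Ioc 0 1) := by
  have hcont : ContinuousOn a (Ioc 0 1) := fun x hx => (ha x hx).continuousAt.continuousWithinAt
  refine ((integrableOn_Ioc_zero_one_rpow_neg hα).const_mul (a 1)⁻¹).mono'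
    ((hcont.inv₀ fun x hx => (pos_of_mul_abs_deriv_le h1 ha hbound hx).ne').aestronglyMeasurable
      measurableSet_Ioc) ?_
  filter_upwards [ae_restrict_mem measurableSet_Ioc] with x hx
  rw [norm_of_nonneg (inv_pos.2 (pos_of_mul_abs_deriv_le h1 ha hbound hx)).le]
  exact inv_le_inv_mul_rpow_neg_of_mul_abs_deriv_le h1 ha hbound hx

theorem setIntegral_inv_le_of_mul_abs_deriv_le (hα : α < 1) (h1 : 0 < a 1)
    (ha : ∀ x ∈ Ioc 0 1, HasDerivAt a (a' x) x)
    (hbound : ∀ x ∈ Ioc 0 1, x * |a' x| ≤ α * a x) :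
    ∫ x in Ioc 0 1, (a x)⁻¹ ≤ 1 / (a 1 * (1 - α)) :=
  calc ∫ x in Ioc 0 1, (a x)⁻¹ ≤ ∫ x in Ioc 0 1, (a 1)⁻¹ * x ^ (-α) :=
        setIntegral_mono_on (integrableOn_inv_of_mul_abs_deriv_le hα h1 ha hbound)
          ((integrableOn_Ioc_zero_one_rpow_neg hα).const_mul _) measurableSet_Ioc
          fun x hx => inv_le_inv_mul_rpow_neg_of_mul_abs_deriv_le h1 ha hbound hx
    _ = 1 / (a 1 * (1 - α)) := by
        rw [MeasureTheory.integral_const_mul, setIntegral_Ioc_zero_one_rpow_neg hα, one_div,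
          one_div, mul_inv]

end WeightBounds

theorem stmt6_general (a a' : ℝ → ℝ) (α : ℝ)
    (hα1 : α < 1)
    (hpos : ∀ x ∈ Ioc (0:ℝ) 1, 0 < a x)
    (haderiv : ∀ x ∈ Ioc (0:ℝ) 1, HasDerivAt a (a' x) x)
    (hbound : ∀ x ∈ Ioc (0:ℝ) 1, x * |a' x| ≤ α * a x)
    (ψ ψ' : ℝ → ℂ)
    (hψ'int : IntegrableOn ψ' (Ioc (0:ℝ) 1))
    (hrep : ∀ τ ∈ Ioo (0:ℝ) 1, ψ τ = -∫ x in τ..1, ψ' x)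
    (hL2 : IntegrableOn (fun x => a x * ‖ψ' x‖ ^ 2) (Ioc (0:ℝ) 1)) :
    ∃ L : ℂ, Tendsto ψ (𝓝[>] (0:ℝ)) (𝓝 L) ∧
      ‖L‖ ^ 2 ≤ (1 / (a 1 * (1 - α))) * ∫ x in Ioc (0:ℝ) 1, a x * ‖ψ' x‖ ^ 2 := by
  have h1 : 0 < a 1 := hpos 1 (right_mem_Ioc.2 zero_lt_one)
  refine ⟨-∫ x in (0:ℝ)..1, ψ' x, ?_, ?_⟩
  · have hint : IntegrableOn ψ' (uIcc 0 1) := by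
      rwa [uIcc_of_le zero_le_one, integrableOn_Icc_iff_integrableOn_Ioc]
    have hprim := continuousOn_primitive_interval_left hint 0 left_mem_uIcc
    rw [uIcc_of_le zero_le_one] at hprim
    rw [← nhdsWithin_Ioo_eq_nhdsGT zero_lt_one]
    refine ((hprim.tendsto.mono_left (nhdsWithin_mono _ Ioo_subset_Icc_self)).neg).congr' ?_
    filter_upwards [self_mem_nhdsWithin] with τ hτ using (hrep τ hτ).symm
  · have hnorm : ‖-∫ x in (0:ℝ)..1, ψ' x‖ ≤ ∫ x in Ioc (0:ℝ) 1, ‖ψ' x‖ := by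
      rw [norm_neg, integral_of_le zero_le_one]
      exact norm_integral_le_integral_norm _
    have hcs := sq_integral_norm_le_integral_inv_mul_integral_mul_sq
      ((ae_restrict_mem measurableSet_Ioc).mono hpos) hψ'int.aestronglyMeasurable
      (integrableOn_inv_of_mul_abs_deriv_le hα1 h1 haderiv hbound) hL2
    calc ‖-∫ x in (0:ℝ)..1, ψ' x‖ ^ 2 ≤ (∫ x in Ioc (0:ℝ) 1, ‖ψ' x‖) ^ 2 :=
          pow_le_pow_left₀ (norm_nonneg _) hnorm 2
      _ ≤ _ := hcs.trans (mul_le_mul_of_nonneg_right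
          (setIntegral_inv_le_of_mul_abs_deriv_le hα1 h1 haderiv hbound)
          (setIntegral_nonneg measurableSet_Ioc fun x hx => by have := hpos x hx; positivity))

/-- Boundary estimate: under (H2), for `ψ ∈ H¹(0,1)` with `ψ(1)=0` and finite
weighted energy, the limit `ψ(0⁺)` exists and
`|ψ(0)|² ≤ (1/(a(1)(1−α)))·∫_0^1 a|ψ'|²`. -/
theorem stmt6 (a a' : ℝ → ℝ) (α : ℝ)
    (hα0 : 0 ≤ α) (hα1 : α < 1)
    (hpos : ∀ x ∈ Ioc (0:ℝ) 1, 0 < a x)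
    (haderiv : ∀ x ∈ Ioc (0:ℝ) 1, HasDerivAt a (a' x) x)
    (hacont : ContinuousOn a' (Ioc (0:ℝ) 1))
    (hbound : ∀ x ∈ Ioc (0:ℝ) 1, x * |a' x| ≤ α * a x)
    (ψ ψ' : ℝ → ℂ)
    (hψ1 : ψ 1 = 0)
    (hderiv : ∀ x ∈ Ioo (0:ℝ) 1, HasDerivAt ψ (ψ' x) x)
    (hψ'int : IntegrableOn ψ' (Ioc (0:ℝ) 1))
    (hrep : ∀ τ ∈ Ioo (0:ℝ) 1, ψ τ = -∫ x in τ..1, ψ' x)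
    (hL2 : IntegrableOn (fun x => a x * ‖ψ' x‖ ^ 2) (Ioc (0:ℝ) 1)) :
    ∃ L : ℂ, Tendsto ψ (𝓝[>] (0:ℝ)) (𝓝 L) ∧
      ‖L‖ ^ 2 ≤ (1 / (a 1 * (1 - α))) * ∫ x in Ioc (0:ℝ) 1, a x * ‖ψ' x‖ ^ 2 :=
  stmt6_general a a' α hα1 hpos haderiv hbound ψ ψ' hψ'int hrep hL2
end

section
/- Let ρ₂, κ₂, κ₁ > 0 and h ∈ C¹([−1,1];ℝ) with h(−1)=h(1)=0. For φ ∈ H²(−1,1) ∩ H¹₀(−1,1) and g ∈ L²(−1,1) (both complex-valued) and ω ∈ ℝ satisfying −ρ₂ω²φ − κ₂φ'' + g = 0 in L²(−1,1), one has ∫_{−1}^{1} h'·(ρ₂|ωφ|² + κ₂|φ'|²) dx = −2Re ∫_{−1}^{1} g·h·(φ̄') dx. -/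
/-!
With `E = ρ₂|ωφ|² + κ₂|φ'|²`, the equation gives `E' = 2 Re (g φ̄')`; integrating `h E'` by parts,
the boundary term `h E` vanishes at `±1` because `h` does.
-/

open Real Set MeasureTheory intervalIntegral

theorem hasDerivAt_energy_density {ρ κ ω x : ℝ} {φ φ' : ℝ → ℂ} {φ''x : ℂ}
    (hφ : HasDerivAt φ (φ' x) x) (hφ' : HasDerivAt φ' φ''x x) :
    HasDerivAt (fun y => ρ * ‖(ω : ℂ) * φ y‖ ^ 2 + κ * ‖φ' y‖ ^ 2)
      (2 * ((ρ * ω ^ 2 * φ x + κ * φ''x) * star (φ' x)).re) x := by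
  refine (((hφ.const_mul (ω : ℂ)).norm_sq.const_mul ρ).add
    (hφ'.norm_sq.const_mul κ)).congr_deriv ?_
  simp only [Complex.inner, Complex.mul_re, Complex.mul_im, Complex.add_re, Complex.add_im,
    Complex.star_def, Complex.conj_re, Complex.conj_im, Complex.ofReal_re, Complex.ofReal_im, pow_two]
  ring

theorem re_intervalIntegral_mul_ofReal_mul {a b : ℝ} {f : ℝ → ℂ} {u : ℝ → ℝ} {c : ℝ → ℂ}
    (hf : IntervalIntegrable (fun x => f x * u x * c x) volume a b) :
    (∫ x in a..b, f x * u x * c x).re = ∫ x in a..b, u x * (f x * c x).re := by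
  refine (Complex.reCLM.intervalIntegral_comp_comm hf).symm.trans (integral_congr fun x _ => ?_)
  rw [Complex.reCLM_apply, mul_right_comm, mul_comm, Complex.re_ofReal_mul]

theorem stmt15_general (ρ₂ κ₂ : ℝ) (ω : ℝ)
    (φ φ' φ'' g : ℝ → ℂ) (h h' : ℝ → ℝ)
    (hφ : ∀ x ∈ Icc (-1:ℝ) 1, HasDerivAt φ (φ' x) x)
    (hφ' : ∀ x ∈ Icc (-1:ℝ) 1, HasDerivAt φ' (φ'' x) x)
    (hgint : IntervalIntegrable g volume (-1) 1)
    (hh : ∀ x ∈ Icc (-1:ℝ) 1, HasDerivAt h (h' x) x)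
    (hhcont : ContinuousOn h' (Icc (-1:ℝ) 1))
    (hhb0 : h (-1) = 0) (hhb1 : h 1 = 0)
    (heq : ∀ x ∈ Icc (-1:ℝ) 1,
      -(ρ₂:ℂ) * (ω:ℂ) ^ 2 * φ x - (κ₂:ℂ) * φ'' x + g x = 0) :
    ∫ x in (-1:ℝ)..1, h' x * (ρ₂ * ‖(ω:ℂ) * φ x‖ ^ 2 + κ₂ * ‖φ' x‖ ^ 2)
      = -2 * (∫ x in (-1:ℝ)..1, g x * (h x : ℂ) * star (φ' x)).re := by
  rw [← uIcc_of_le (by norm_num : (-1:ℝ) ≤ 1)] at hφ hφ' hh hhcont heq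
  have hφ'c : ContinuousOn (fun x => star (φ' x)) (uIcc (-1:ℝ) 1) :=
    (HasDerivAt.continuousOn hφ').star
  have hhc : ContinuousOn (fun x => (h x : ℂ)) (uIcc (-1:ℝ) 1) :=
    Complex.continuous_ofReal.comp_continuousOn (HasDerivAt.continuousOn hh)
  have hgφ' : IntervalIntegrable (fun x => g x * star (φ' x)) volume (-1) 1 :=
    hgint.mul_continuousOn hφ'c
  have hE : ∀ x ∈ uIcc (-1:ℝ) 1, HasDerivAt
      (fun y => ρ₂ * ‖(ω:ℂ) * φ y‖ ^ 2 + κ₂ * ‖φ' y‖ ^ 2) (2 * (g x * star (φ' x)).re) x := by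
    intro x hx
    have hg : g x = ρ₂ * ω ^ 2 * φ x + κ₂ * φ'' x := by linear_combination heq x hx
    exact hg ▸ hasDerivAt_energy_density (hφ x hx) (hφ' x hx)
  have hparts := integral_mul_deriv_eq_deriv_mul hh hE hhcont.intervalIntegrable
    (⟨hgφ'.1.re.const_mul 2, hgφ'.2.re.const_mul 2⟩ : IntervalIntegrable _ volume (-1) 1)
  rw [re_intervalIntegral_mul_ofReal_mul ((hgint.mul_continuousOn hhc).mul_continuousOn hφ'c)]
  simp only [hhb0, hhb1, zero_mul, sub_zero, zero_sub, mul_left_comm _ (2 : ℝ),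
    intervalIntegral.integral_const_mul] at hparts
  linarith

/-- Multiplier identity for the `φ`-equation: if `−ρ₂ω²φ − κ₂φ'' + g = 0`, then
`∫ h'(ρ₂|ωφ|² + κ₂|φ'|²) dx = −2Re∫ g·h·φ̄' dx`. -/
theorem stmt15 (ρ₂ κ₂ κ₁ : ℝ) (hρ₂ : 0 < ρ₂) (hκ₂ : 0 < κ₂) (hκ₁ : 0 < κ₁) (ω : ℝ)
    (φ φ' φ'' g : ℝ → ℂ) (h h' : ℝ → ℝ)
    (hφ : ∀ x ∈ Icc (-1:ℝ) 1, HasDerivAt φ (φ' x) x)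
    (hφ' : ∀ x ∈ Icc (-1:ℝ) 1, HasDerivAt φ' (φ'' x) x)
    (hφ''int : IntervalIntegrable φ'' volume (-1) 1)
    (hφcont : ContinuousOn φ' (Icc (-1:ℝ) 1))
    (hgint : IntervalIntegrable g volume (-1) 1)
    (hh : ∀ x ∈ Icc (-1:ℝ) 1, HasDerivAt h (h' x) x)
    (hhcont : ContinuousOn h' (Icc (-1:ℝ) 1))
    (hbc0 : φ (-1) = 0) (hbc1 : φ 1 = 0)
    (hhb0 : h (-1) = 0) (hhb1 : h 1 = 0)
    (heq : ∀ x ∈ Icc (-1:ℝ) 1,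
      -(ρ₂:ℂ) * (ω:ℂ) ^ 2 * φ x - (κ₂:ℂ) * φ'' x + g x = 0) :
    ∫ x in (-1:ℝ)..1, h' x * (ρ₂ * ‖(ω:ℂ) * φ x‖ ^ 2 + κ₂ * ‖φ' x‖ ^ 2)
      = -2 * (∫ x in (-1:ℝ)..1, g x * (h x : ℂ) * star (φ' x)).re :=
  stmt15_general ρ₂ κ₂ ω φ φ' φ'' g h h' hφ hφ' hgint hh hhcont hhb0 hhb1 heq
end
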